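/- Assume q ≡ 2 (mod 4) and Λ > q/2. Let r = 1/q − 1/(2Λ) and c_m = 2m/q for integers m with 0 ≤ m < (q+2)/4. Then: (i) p vanishes identically on [c_m − r, c_m + r] ∩ [0,1/2] for each such m; (ii) every nonempty open interval J ⊆ (0,1/2) on which p is constant is contained in some [c_m − r, c_m + r], and the constant value of p on J is 0. -/

import Mathlib

noncomputable def e (x : ℝ) : ℂ := Complex.exp (2 * Real.pi * Complex.I * x)

noncomputable def G (a k : ℤ) (q : ℕ) : ℂ :=
  ∑ ℓ ∈ Finset.range q, e (((a * ℓ ^ 2 + k * ℓ : ℤ) : ℝ) / q)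

noncomputable def invMod (a : ℤ) (q : ℕ) : ℕ := ZMod.val ((a : ZMod q)⁻¹)

noncomputable def cc (a : ℤ) (q : ℕ) (k : ℤ) : ℂ :=
  if Odd q then e ((invMod (4 * a) q : ℝ) * (k : ℝ) ^ 2 / q)
  else if Even (k + (q : ℤ) / 2) then
    (Real.sqrt 2 : ℂ) * e ((invMod a q : ℝ) * (k : ℝ) ^ 2 / (4 * q))
  else 0

noncomputable def Iset (Λ : ℝ) (q : ℕ) (x : ℝ) : Finset ℤ :=
  Finset.Icc ⌈x * q - q / (2 * Λ)⌉ ⌊x * q + q / (2 * Λ)⌋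

noncomputable def pden (N q : ℕ) (Λ : ℝ) (a : ℤ) (x : ℝ) : ℝ :=
  (4 * Λ / q) * (‖∑ k ∈ Iset Λ q x,
    cc a q k * (Real.sin (2 * Real.pi * N * Λ * (x - k / q)) : ℂ)‖) ^ 2

noncomputable def Splus (N q : ℕ) (Λ : ℝ) (a : ℤ) (x : ℝ) : ℂ :=
  ∑ k ∈ Iset Λ q x, cc a q k * e (N * Λ * k / q)

noncomputable def Sminus (N q : ℕ) (Λ : ℝ) (a : ℤ) (x : ℝ) : ℂ :=
  ∑ k ∈ Iset Λ q x, cc a q k * e (-(N * Λ * k / q))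

def Nonsingular (Λ : ℝ) (q : ℕ) (x : ℝ) : Prop :=
  (Odd q → ∀ n : ℤ, x * q - q / (2 * Λ) ≠ n ∧ x * q + q / (2 * Λ) ≠ n) ∧
  (Even q → ∀ n : ℤ, Even n →
    x * q - q / (2 * Λ) + q / 2 ≠ n ∧ x * q + q / (2 * Λ) + q / 2 ≠ n)

noncomputable def Dnear (x : ℝ) : ℝ := |x - round x|

/-!
Since `q ≡ 2 (mod 4)`, `q/2` is odd, so `c_{a/q}(k)` vanishes for even `k` and has modulus `√2`
for odd `k`. As `Λ > q/2`, the window `I(x)` has half-length `q/(2Λ) < 1` and so contains at most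
one odd integer. If `xq` is at distance at least `q/(2Λ)` from every odd integer, an odd `k` can
only lie at an endpoint of `I(x)`, where `x - k/q = ±1/(2Λ)` and the sine is `sin(±πN) = 0`; hence
`p(x) = 0`. Otherwise `p` equals `(8Λ/q) sin²(2πNΛ(x - k/q))` near `x`, which by analyticity is
nowhere locally constant. An interval on which `p` is constant therefore avoids these gaps, and
lies between two consecutive ones.
-/

open Real Filter Topology

lemma norm_e (x : ℝ) : ‖e x‖ = 1 := by
  rw [e, show 2 * π * Complex.I * (x : ℂ) = ((2 * π * x : ℝ) : ℂ) * Complex.I by push_cast; ring,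
    Complex.norm_exp_ofReal_mul_I]

lemma cc_eq_zero_of_even {a : ℤ} {q : ℕ} {k : ℤ} (h2 : q % 4 = 2) (hk : Even k) : cc a q k = 0 := by
  have hq : ¬ Odd q := by rw [Nat.odd_iff]; omega
  have hkq : ¬ Even (k + (q : ℤ) / 2) := by
    rw [Int.not_even_iff_odd, Int.odd_iff]; have := Int.even_iff.mp hk; omega
  rw [cc, if_neg hq, if_neg hkq]

lemma norm_cc_of_odd {a : ℤ} {q : ℕ} {k : ℤ} (h2 : q % 4 = 2) (hk : Odd k) :
    ‖cc a q k‖ = √2 := by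
  have hq : ¬ Odd q := by rw [Nat.odd_iff]; omega
  have hkq : Even (k + (q : ℤ) / 2) := by
    rw [Int.even_iff]; have := Int.odd_iff.mp hk; omega
  rw [cc, if_neg hq, if_pos hkq, norm_mul, norm_e, mul_one, Complex.norm_real, Real.norm_eq_abs,
    abs_of_nonneg (Real.sqrt_nonneg 2)]

lemma mem_Iset_iff {Λ : ℝ} {q : ℕ} {x : ℝ} {k : ℤ} :
    k ∈ Iset Λ q x ↔ |x * q - k| ≤ q / (2 * Λ) := by
  rw [Iset, Finset.mem_Icc, Int.ceil_le, Int.le_floor, abs_sub_le_iff]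
  constructor <;> rintro ⟨h₁, h₂⟩ <;> constructor <;> linarith

lemma sin_eq_zero_of_abs_sub_eq {Λ : ℝ} (hΛ : 0 < Λ) {q : ℕ} (hq : (q : ℝ) ≠ 0) (N : ℕ)
    {x : ℝ} {k : ℤ} (h : |x * q - k| = q / (2 * Λ)) :
    sin (2 * π * N * Λ * (x - k / q)) = 0 := by
  have hx : x - k / q = (x * q - k) / q := by field_simp
  rcases (abs_eq (by positivity)).1 h with h' | h'
  · rw [hx, h', show 2 * π * N * Λ * (q / (2 * Λ) / q) = N * π by field_simp, sin_nat_mul_pi]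
  · rw [hx, h', show 2 * π * N * Λ * (-(q / (2 * Λ)) / q) = -(N * π) by field_simp, sin_neg,
      sin_nat_mul_pi, neg_zero]

lemma pden_eq_zero_of_abs_sub_two_mul_le (N : ℕ) (a : ℤ) {Λ : ℝ} (hΛ : 0 < Λ) {q : ℕ}
    (h2 : q % 4 = 2) {x : ℝ} {m : ℤ} (hx : |x * q - 2 * m| ≤ 1 - q / (2 * Λ)) :
    pden N q Λ a x = 0 := by
  have hq : (q : ℝ) ≠ 0 := by norm_cast; omega
  suffices hsum : ∑ k ∈ Iset Λ q x, cc a q k * (sin (2 * π * N * Λ * (x - k / q)) : ℂ) = 0 by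
    rw [pden, hsum, norm_zero]; ring
  refine Finset.sum_eq_zero fun k hk => ?_
  rcases Int.even_or_odd k with hk2 | hk2
  · rw [cc_eq_zero_of_even h2 hk2, zero_mul]
  have hk1 : (1 : ℝ) ≤ |(k : ℝ) - 2 * m| := by
    have : k - 2 * m ≠ 0 := by obtain ⟨j, rfl⟩ := hk2; omega
    exact_mod_cast Int.one_le_abs this
  have hedge : |x * q - k| = q / (2 * Λ) :=
    le_antisymm (mem_Iset_iff.1 hk)
      (by linarith [abs_sub_le (k : ℝ) (x * q) (2 * m), abs_sub_comm (k : ℝ) (x * q)])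
  rw [sin_eq_zero_of_abs_sub_eq hΛ hq N hedge, Complex.ofReal_zero, mul_zero]

lemma pden_eq_of_abs_sub_odd_lt (N : ℕ) (a : ℤ) {Λ : ℝ} {q : ℕ} (h2 : q % 4 = 2)
    (hfrag : (q : ℝ) / 2 < Λ) {x : ℝ} {k : ℤ} (hk : Odd k) (hx : |x * q - k| < q / (2 * Λ)) :
    pden N q Λ a x = 8 * Λ / q * sin (2 * π * N * Λ * (x - k / q)) ^ 2 := by
  have hq : (0 : ℝ) < q := by exact_mod_cast (by omega : 0 < q)
  have hh : (q : ℝ) / (2 * Λ) < 1 := by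
    rw [div_lt_one (by linarith [half_pos hq])]; linarith
  have hsum : ∑ j ∈ Iset Λ q x, cc a q j * (sin (2 * π * N * Λ * (x - j / q)) : ℂ)
      = cc a q k * (sin (2 * π * N * Λ * (x - k / q)) : ℂ) := by
    refine Finset.sum_eq_single_of_mem k (mem_Iset_iff.2 hx.le) fun j hj hjk => ?_
    rcases Int.even_or_odd j with hj2 | hj2
    · rw [cc_eq_zero_of_even h2 hj2, zero_mul]
    have hdist : (2 : ℝ) ≤ |(j : ℝ) - k| := by
      have : (2 : ℤ) ≤ |j - k| := by
        rw [le_abs]; obtain ⟨r, rfl⟩ := hj2; obtain ⟨s, rfl⟩ := hk; omega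
      exact_mod_cast this
    linarith [abs_sub_le (j : ℝ) (x * q) k, abs_sub_comm (j : ℝ) (x * q), mem_Iset_iff.1 hj]
  rw [pden, hsum, norm_mul, norm_cc_of_odd h2 hk, Complex.norm_real, Real.norm_eq_abs, mul_pow,
    sq_sqrt zero_le_two, sq_abs]
  ring

lemma sin_sq_not_eventually_const {θ : ℝ} (hθ : θ ≠ 0) (c w x : ℝ) :
    ¬ (fun y => sin (θ * (y - c)) ^ 2) =ᶠ[𝓝 x] fun _ => w := by
  intro h
  have hconst := AnalyticOnNhd.eq_of_eventuallyEq (fun y _ => by fun_prop) analyticOnNhd_const h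
  have h0 := congrFun hconst c
  have h1 := congrFun hconst (c + π / 2 / θ)
  simp only [sub_self, mul_zero, sin_zero, add_sub_cancel_left, mul_div_cancel₀ _ hθ,
    sin_pi_div_two] at h0 h1
  norm_num at h0 h1
  linarith

lemma le_abs_sub_odd_of_pden_eqOn {N : ℕ} (hN : N ≠ 0) (a : ℤ) {Λ : ℝ} {q : ℕ} (h2 : q % 4 = 2)
    (hfrag : (q : ℝ) / 2 < Λ) {U : Set ℝ} (hU : IsOpen U) {v : ℝ}
    (hv : ∀ y ∈ U, pden N q Λ a y = v) {x : ℝ} (hx : x ∈ U) {k : ℤ} (hk : Odd k) :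
    q / (2 * Λ) ≤ |x * q - k| := by
  have hq : (0 : ℝ) < q := by exact_mod_cast (by omega : 0 < q)
  have hΛ : 0 < Λ := by linarith [half_pos hq]
  by_contra! hnear
  have hnhds : ∀ᶠ y in 𝓝 x, y ∈ U ∧ |y * q - k| < q / (2 * Λ) :=
    (hU.eventually_mem hx).and
      ((by fun_prop : Continuous fun y : ℝ => |y * q - k|).continuousAt.eventually_lt
        continuousAt_const hnear)
  refine sin_sq_not_eventually_const (θ := 2 * π * N * Λ) (by positivity) (k / q) (v * q / (8 * Λ))
    x ?_
  filter_upwards [hnhds] with y ⟨hyU, hy⟩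
  have hvy := hv y hyU
  rw [pden_eq_of_abs_sub_odd_lt N a h2 hfrag hk hy] at hvy
  rw [← hvy]
  field_simp

lemma exists_abs_sub_two_mul_le_of_forall_le_abs_sub_odd {c h l u : ℝ} (hc : 0 < c) (hh : 0 < h)
    (hfar : ∀ x ∈ Set.Ioo l u, ∀ k : ℤ, Odd k → h ≤ |x * c - k|) :
    ∃ m : ℤ, ∀ x ∈ Set.Ioo l u, |x * c - 2 * m| ≤ 1 - h := by
  set m := ⌊(l * c + 1) / 2⌋
  have hm₁ : 2 * (m : ℝ) - 1 ≤ l * c := by linarith [Int.floor_le ((l * c + 1) / 2)]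
  have hm₂ : l * c < 2 * m + 1 := by linarith [Int.lt_floor_add_one ((l * c + 1) / 2)]
  have hodd₁ : Odd (2 * m - 1) := ⟨m - 1, by ring⟩
  have hodd₂ : Odd (2 * m + 1) := odd_two_mul_add_one m
  have hu : u * c ≤ 2 * m + 1 := by
    by_contra! hlt
    have hmem : ((2 * m + 1 : ℤ) : ℝ) / c ∈ Set.Ioo l u := by
      push_cast
      exact ⟨by rw [lt_div_iff₀ hc]; linarith, by rw [div_lt_iff₀ hc]; linarith⟩
    have := hfar _ hmem _ hodd₂
    rw [div_mul_cancel₀ _ hc.ne', sub_self, abs_zero] at this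
    linarith
  refine ⟨m, fun x hx => abs_le.2 ⟨?_, ?_⟩⟩
  · have hlx : l * c < x * c := mul_lt_mul_of_pos_right hx.1 hc
    have := hfar x hx _ hodd₁
    rw [abs_of_pos (by push_cast; linarith)] at this
    push_cast at this
    linarith
  · have hxu : x * c < u * c := mul_lt_mul_of_pos_right hx.2 hc
    have := hfar x hx _ hodd₂
    rw [abs_of_neg (by push_cast; linarith)] at this
    push_cast at this
    linarith

lemma nonneg_and_lt_of_abs_sub_two_mul_le {q : ℕ} {h x : ℝ} {m : ℤ} (hh : 0 < h)
    (hx : x ∈ Set.Ioo (0 : ℝ) (1 / 2)) (hm : |x * q - 2 * m| ≤ 1 - h) :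
    0 ≤ m ∧ (m : ℝ) < ((q : ℝ) + 2) / 4 := by
  have hq : (0 : ℝ) ≤ q := Nat.cast_nonneg q
  have hxq₀ : 0 ≤ x * q := mul_nonneg hx.1.le hq
  have hxq : x * q ≤ q / 2 := by nlinarith [hx.2]
  obtain ⟨h₁, h₂⟩ := abs_le.1 hm
  refine ⟨?_, by linarith⟩
  have : ((-1 : ℤ) : ℝ) < ((2 * m : ℤ) : ℝ) := by push_cast; linarith
  have : (-1 : ℤ) < 2 * m := by exact_mod_cast this
  omega

def plateau (Λ : ℝ) (q : ℕ) (m : ℤ) : Set ℝ :=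
  Set.Icc (2 * (m : ℝ) / q - (1 / q - 1 / (2 * Λ))) (2 * (m : ℝ) / q + (1 / q - 1 / (2 * Λ)))

lemma mem_plateau_iff {Λ : ℝ} {q : ℕ} (hq : (0 : ℝ) < q) {m : ℤ} {x : ℝ} :
    x ∈ plateau Λ q m ↔ |x * q - 2 * m| ≤ 1 - q / (2 * Λ) := by
  have hl : 2 * (m : ℝ) / q - (1 / q - 1 / (2 * Λ)) = (2 * m - (1 - q / (2 * Λ))) / q := by
    field_simp
  have hu : 2 * (m : ℝ) / q + (1 / q - 1 / (2 * Λ)) = (2 * m + (1 - q / (2 * Λ))) / q := by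
    field_simp
  rw [plateau, Set.mem_Icc, hl, hu, div_le_iff₀ hq, le_div_iff₀ hq, abs_le]
  constructor <;> rintro ⟨h₁, h₂⟩ <;> constructor <;> linarith

theorem stmt9_general (Λ : ℝ) (N : ℕ) (hN : 0 < N) (a : ℤ) (q : ℕ)
    (h2 : q % 4 = 2) (hfrag : (q : ℝ) / 2 < Λ) :
    (∀ m : ℤ, 0 ≤ m → (m : ℝ) < ((q : ℝ) + 2) / 4 →
      ∀ x ∈ Set.Icc (2 * (m : ℝ) / q - (1 / q - 1 / (2 * Λ)))
          (2 * (m : ℝ) / q + (1 / q - 1 / (2 * Λ))) ∩ Set.Icc (0 : ℝ) (1 / 2),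
        pden N q Λ a x = 0) ∧
    (∀ l u : ℝ, l < u → Set.Ioo l u ⊆ Set.Ioo (0 : ℝ) (1 / 2) →
      (∃ v : ℝ, ∀ x ∈ Set.Ioo l u, pden N q Λ a x = v) →
      (∃ m : ℤ, 0 ≤ m ∧ (m : ℝ) < ((q : ℝ) + 2) / 4 ∧
        Set.Ioo l u ⊆ Set.Icc (2 * (m : ℝ) / q - (1 / q - 1 / (2 * Λ)))
          (2 * (m : ℝ) / q + (1 / q - 1 / (2 * Λ)))) ∧
      ∀ x ∈ Set.Ioo l u, pden N q Λ a x = 0) := by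
  have hq : (0 : ℝ) < q := by exact_mod_cast (by omega : 0 < q)
  have hΛ : 0 < Λ := by linarith [half_pos hq]
  refine ⟨fun m _ _ x hx =>
    pden_eq_zero_of_abs_sub_two_mul_le N a hΛ h2 ((mem_plateau_iff hq).1 hx.1), ?_⟩
  rintro l u hlu hsub ⟨v, hv⟩
  obtain ⟨m, hm⟩ := exists_abs_sub_two_mul_le_of_forall_le_abs_sub_odd hq (by positivity)
    fun x hx k hk => le_abs_sub_odd_of_pden_eqOn hN.ne' a h2 hfrag isOpen_Ioo hv hx hk
  have hmid : (l + u) / 2 ∈ Set.Ioo l u := ⟨by linarith, by linarith⟩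
  obtain ⟨hm₀, hmq⟩ := nonneg_and_lt_of_abs_sub_two_mul_le (by positivity) (hsub hmid) (hm _ hmid)
  exact ⟨⟨m, hm₀, hmq, fun x hx => (mem_plateau_iff hq).2 (hm x hx)⟩,
    fun x hx => pden_eq_zero_of_abs_sub_two_mul_le N a hΛ h2 (hm x hx)⟩

theorem stmt9 (Λ : ℝ) (hΛ : 1 < Λ) (N : ℕ) (hN : 0 < N) (a : ℤ) (q : ℕ)
    (hq : 0 < q) (hcop : Int.gcd a q = 1) (h2 : q % 4 = 2) (hfrag : (q : ℝ) / 2 < Λ) :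
    (∀ m : ℤ, 0 ≤ m → (m : ℝ) < ((q : ℝ) + 2) / 4 →
      ∀ x ∈ Set.Icc (2 * (m : ℝ) / q - (1 / q - 1 / (2 * Λ)))
          (2 * (m : ℝ) / q + (1 / q - 1 / (2 * Λ))) ∩ Set.Icc (0 : ℝ) (1 / 2),
        pden N q Λ a x = 0) ∧
    (∀ l u : ℝ, l < u → Set.Ioo l u ⊆ Set.Ioo (0 : ℝ) (1 / 2) →
      (∃ v : ℝ, ∀ x ∈ Set.Ioo l u, pden N q Λ a x = v) →
      (∃ m : ℤ, 0 ≤ m ∧ (m : ℝ) < ((q : ℝ) + 2) / 4 ∧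
        Set.Ioo l u ⊆ Set.Icc (2 * (m : ℝ) / q - (1 / q - 1 / (2 * Λ)))
          (2 * (m : ℝ) / q + (1 / q - 1 / (2 * Λ)))) ∧
      ∀ x ∈ Set.Ioo l u, pden N q Λ a x = 0) :=
  stmt9_general Λ N hN a q h2 hfrag
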